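/- There exists a single function c assigning to every dyadic square one of 3 colors such that, for every balanced quadtree Q, the restriction of c to the squares of Q is a proper coloring of Q under edge adjacency. (In particular, the color of each square can be chosen depending only on its size and position, independently of the rest of the quadtree.) -/
import Mathlib

/-- A dyadic square `[i/2^k, (i+1)/2^k] × [j/2^k, (j+1)/2^k] ⊆ [0,1]²`,
recorded by its level `k` and coordinates `i, j < 2^k`. -/
structure DyadicSquare where
  k : ℕ
  i : ℕ
  j : ℕ
  hi : i < 2 ^ k
  hj : j < 2 ^ k
deriving DecidableEq

namespace DyadicSquare

/-- The subset of the plane occupied by a dyadic square. -/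
def region (s : DyadicSquare) : Set (ℝ × ℝ) :=
  Set.Icc ((s.i : ℝ) / 2 ^ s.k) (((s.i : ℝ) + 1) / 2 ^ s.k) ×ˢ
    Set.Icc ((s.j : ℝ) / 2 ^ s.k) (((s.j : ℝ) + 1) / 2 ^ s.k)

/-- Two squares are edge-adjacent if they are distinct and their intersection
contains more than one point (a segment of positive length). -/
def EdgeAdj (s t : DyadicSquare) : Prop :=
  s ≠ t ∧ (s.region ∩ t.region).Nontrivial

/-- Two squares are corner-adjacent if they are distinct and their intersection
is nonempty (they share at least a corner point or part of an edge). -/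
def CornerAdj (s t : DyadicSquare) : Prop :=
  s ≠ t ∧ (s.region ∩ t.region).Nonempty

end DyadicSquare

/-- A finite set of dyadic squares has pairwise disjoint interiors. -/
def PairwiseDisjointInteriors (Q : Finset DyadicSquare) : Prop :=
  (Q : Set DyadicSquare).Pairwise fun s t =>
    interior s.region ∩ interior t.region = ∅

/-- A quadtree: a finite set of dyadic squares with pairwise disjoint interiors
whose union is the unit square `[0,1]²`. -/
def IsQuadtree (Q : Finset DyadicSquare) : Prop :=
  PairwiseDisjointInteriors Q ∧
    (⋃ s ∈ Q, s.region) = Set.Icc (0 : ℝ) 1 ×ˢ Set.Icc (0 : ℝ) 1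

/-- A quadtree is balanced if any two edge-adjacent squares have side lengths
(`2^{-k}`) within a factor of two of each other. -/
def IsBalanced (Q : Finset DyadicSquare) : Prop :=
  ∀ s ∈ Q, ∀ t ∈ Q, DyadicSquare.EdgeAdj s t → s.k ≤ t.k + 1 ∧ t.k ≤ s.k + 1

namespace UTC

/-- The universal coloring: `(i+j) mod 3` on even levels, `(1-i-j) mod 3` on odd. -/
def col (s : DyadicSquare) : ZMod 3 :=
  if s.k % 2 = 0 then (((s.i : ℤ) + (s.j : ℤ) : ℤ) : ZMod 3)
  else 1 - (((s.i : ℤ) + (s.j : ℤ) : ℤ) : ZMod 3)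

lemma lt_same {k a b : ℕ} (h : (a:ℝ)/2^k < (b:ℝ)/2^k) : a < b := by
  rw [div_lt_div_iff₀ (by positivity) (by positivity)] at h
  have : (a : ℝ) < b := by
    have hp : (0:ℝ) < 2^k := by positivity
    nlinarith
  exact_mod_cast this

lemma le_same {k a b : ℕ} (h : (a:ℝ)/2^k ≤ (b:ℝ)/2^k) : a ≤ b := by
  rw [div_le_div_iff₀ (by positivity) (by positivity)] at h
  have : (a : ℝ) ≤ b := by
    have hp : (0:ℝ) < 2^k := by positivity
    nlinarith
  exact_mod_cast this

lemma lt_up {k a b : ℕ} (h : (a:ℝ)/2^k < (b:ℝ)/2^(k+1)) : 2*a < b := by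
  rw [div_lt_div_iff₀ (by positivity) (by positivity), pow_succ] at h
  have : (2*a : ℝ) < b := by
    have hp : (0:ℝ) < 2^k := by positivity
    nlinarith
  exact_mod_cast this

lemma le_up {k a b : ℕ} (h : (a:ℝ)/2^k ≤ (b:ℝ)/2^(k+1)) : 2*a ≤ b := by
  rw [div_le_div_iff₀ (by positivity) (by positivity), pow_succ] at h
  have : (2*a : ℝ) ≤ b := by
    have hp : (0:ℝ) < 2^k := by positivity
    nlinarith
  exact_mod_cast this

lemma lt_down {k a b : ℕ} (h : (a:ℝ)/2^(k+1) < (b:ℝ)/2^k) : a < 2*b := by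
  rw [div_lt_div_iff₀ (by positivity) (by positivity), pow_succ] at h
  have : (a : ℝ) < 2*b := by
    have hp : (0:ℝ) < 2^k := by positivity
    nlinarith
  exact_mod_cast this

lemma le_down {k a b : ℕ} (h : (a:ℝ)/2^(k+1) ≤ (b:ℝ)/2^k) : a ≤ 2*b := by
  rw [div_le_div_iff₀ (by positivity) (by positivity), pow_succ] at h
  have : (a : ℝ) ≤ 2*b := by
    have hp : (0:ℝ) < 2^k := by positivity
    nlinarith
  exact_mod_cast this

lemma up_lt {k a b : ℕ} (h : 2*a < b) : (a:ℝ)/2^k < (b:ℝ)/2^(k+1) := by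
  rw [div_lt_div_iff₀ (by positivity) (by positivity), pow_succ]
  have : (2*a : ℝ) < b := by exact_mod_cast h
  have hp : (0:ℝ) < 2^k := by positivity
  nlinarith

lemma down_lt {k a b : ℕ} (h : a < 2*b) : (a:ℝ)/2^(k+1) < (b:ℝ)/2^k := by
  rw [div_lt_div_iff₀ (by positivity) (by positivity), pow_succ]
  have : (a : ℝ) < 2*b := by exact_mod_cast h
  have hp : (0:ℝ) < 2^k := by positivity
  nlinarith

lemma same_lt {k a b : ℕ} (h : a < b) : (a:ℝ)/2^k < (b:ℝ)/2^k := by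
  rw [div_lt_div_iff₀ (by positivity) (by positivity)]
  have : (a : ℝ) < b := by exact_mod_cast h
  have hp : (0:ℝ) < 2^k := by positivity
  nlinarith

lemma DS_ext {s t : DyadicSquare} (h1 : s.k = t.k) (h2 : s.i = t.i) (h3 : s.j = t.j) :
    s = t := by
  cases s; cases t; simp_all

lemma prod_nontrivial_aux {X Y : Set ℝ} (h : (X ×ˢ Y).Nontrivial) :
    X.Nonempty ∧ Y.Nonempty ∧ (X.Nontrivial ∨ Y.Nontrivial) := by
  obtain ⟨p, hp, q, hq, hpq⟩ := h
  obtain ⟨hp1, hp2⟩ := Set.mem_prod.mp hp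
  obtain ⟨hq1, hq2⟩ := Set.mem_prod.mp hq
  refine ⟨⟨p.1, hp1⟩, ⟨p.2, hp2⟩, ?_⟩
  by_cases h1 : p.1 = q.1
  · exact Or.inr ⟨p.2, hp2, q.2, hq2, fun h2 => hpq (Prod.ext h1 h2)⟩
  · exact Or.inl ⟨p.1, hp1, q.1, hq1, h1⟩

lemma icc_nontrivial {a b : ℝ} (h : (Set.Icc a b).Nontrivial) : a < b := by
  by_contra hab
  exact h.not_subsingleton (Set.subsingleton_Icc_of_ge (le_of_not_gt hab))

/-- same-level key ZMod fact -/
lemma same_ne (si sj ti tj : ℕ)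
    (h : (ti:ℤ) + tj = (si:ℤ) + sj + 1 ∨ (ti:ℤ) + tj + 1 = (si:ℤ) + sj) :
    (((si : ℤ) + (sj : ℤ) : ℤ) : ZMod 3) ≠ (((ti : ℤ) + (tj : ℤ) : ℤ) : ZMod 3) := by
  rcases h with h | h
  · rw [show ((ti:ℤ) + tj : ℤ) = (si:ℤ) + sj + 1 from h]
    push_cast
    generalize ((si : ZMod 3) + (sj : ZMod 3)) = a
    revert a; decide
  · rw [show ((si:ℤ) + sj : ℤ) = (ti:ℤ) + tj + 1 from by omega]
    push_cast
    generalize ((ti : ZMod 3) + (tj : ZMod 3)) = a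
    revert a; decide

/-- cross-level key ZMod fact -/
lemma cross_ne (si sj ti tj : ℕ)
    (h1 : (ti:ℤ) = 2*si ∨ (ti:ℤ) = 2*si + 1)
    (h2 : (tj:ℤ) + 1 = 2*sj ∨ (tj:ℤ) = 2*sj + 2) :
    (((si : ℤ) + (sj : ℤ) : ℤ) : ZMod 3) + (((ti : ℤ) + (tj : ℤ) : ℤ) : ZMod 3) ≠ 1 := by
  have e : ((((ti:ℤ) + tj : ℤ)) : ZMod 3)
      = 2 * (((si:ℤ) + sj : ℤ) : ZMod 3) + ((((ti:ℤ) + tj) - 2*((si:ℤ)+sj) : ℤ) : ZMod 3) := by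
    push_cast; ring
  rw [e]
  rcases h1 with h1 | h1 <;> rcases h2 with h2 | h2 <;>
    [ (rw [show ((ti:ℤ) + tj) - 2*((si:ℤ)+sj) = -1 from by omega]);
      (rw [show ((ti:ℤ) + tj) - 2*((si:ℤ)+sj) = 2 from by omega]);
      (rw [show ((ti:ℤ) + tj) - 2*((si:ℤ)+sj) = 0 from by omega]);
      (rw [show ((ti:ℤ) + tj) - 2*((si:ℤ)+sj) = 3 from by omega])] <;>
  · push_cast
    generalize ((si : ZMod 3) + (sj : ZMod 3)) = a
    revert a; decide

open Set DyadicSquare in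
lemma key (s t : DyadicSquare) (hk : t.k = s.k ∨ t.k = s.k + 1)
    (hne : s ≠ t)
    (hnt : (s.region ∩ t.region).Nontrivial)
    (hdisj : interior s.region ∩ interior t.region = ∅) :
    col s ≠ col t := by
  rw [region, region, Set.prod_inter_prod] at hnt
  obtain ⟨hx, hy, hst⟩ := prod_nontrivial_aux hnt
  rw [Set.Icc_inter_Icc, Set.nonempty_Icc] at hx hy
  -- weak overlap inequalities
  have hx1 : (s.i : ℝ)/2^s.k ≤ ((t.i : ℝ)+1)/2^t.k :=
    le_trans (le_max_left _ _) (hx.trans (min_le_right _ _))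
  have hx2 : (t.i : ℝ)/2^t.k ≤ ((s.i : ℝ)+1)/2^s.k :=
    le_trans (le_max_right _ _) (hx.trans (min_le_left _ _))
  have hy1 : (s.j : ℝ)/2^s.k ≤ ((t.j : ℝ)+1)/2^t.k :=
    le_trans (le_max_left _ _) (hy.trans (min_le_right _ _))
  have hy2 : (t.j : ℝ)/2^t.k ≤ ((s.j : ℝ)+1)/2^s.k :=
    le_trans (le_max_right _ _) (hy.trans (min_le_left _ _))
  -- interiors
  rw [region, region, interior_prod_eq, interior_prod_eq, interior_Icc, interior_Icc,
    interior_Icc, interior_Icc, Set.prod_inter_prod, Set.prod_eq_empty_iff,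
    Set.Ioo_inter_Ioo, Set.Ioo_inter_Ioo, Set.Ioo_eq_empty_iff, Set.Ioo_eq_empty_iff] at hdisj
  -- strictness in exactly one coordinate
  have hSx : (Set.Icc ((s.i:ℝ)/2^s.k) (((s.i:ℝ)+1)/2^s.k) ∩
      Set.Icc ((t.i:ℝ)/2^t.k) (((t.i:ℝ)+1)/2^t.k)).Nontrivial →
      max ((s.i:ℝ)/2^s.k) ((t.i:ℝ)/2^t.k) < min (((s.i:ℝ)+1)/2^s.k) (((t.i:ℝ)+1)/2^t.k) := by
    intro h; rw [Set.Icc_inter_Icc] at h; exact icc_nontrivial h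
  have hSy : (Set.Icc ((s.j:ℝ)/2^s.k) (((s.j:ℝ)+1)/2^s.k) ∩
      Set.Icc ((t.j:ℝ)/2^t.k) (((t.j:ℝ)+1)/2^t.k)).Nontrivial →
      max ((s.j:ℝ)/2^s.k) ((t.j:ℝ)/2^t.k) < min (((s.j:ℝ)+1)/2^s.k) (((t.j:ℝ)+1)/2^t.k) := by
    intro h; rw [Set.Icc_inter_Icc] at h; exact icc_nontrivial h
  have hstrict : (max ((s.i:ℝ)/2^s.k) ((t.i:ℝ)/2^t.k)
        < min (((s.i:ℝ)+1)/2^s.k) (((t.i:ℝ)+1)/2^t.k)) ∨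
      (max ((s.j:ℝ)/2^s.k) ((t.j:ℝ)/2^t.k)
        < min (((s.j:ℝ)+1)/2^s.k) (((t.j:ℝ)+1)/2^t.k)) := by
    rcases hst with h | h
    · exact Or.inl (hSx h)
    · exact Or.inr (hSy h)
  rcases hstrict with hS | hS
  · -- strict overlap in x, weak in y
    have hx3 : (s.i:ℝ)/2^s.k < ((t.i:ℝ)+1)/2^t.k :=
      lt_of_le_of_lt (le_max_left _ _) (lt_of_lt_of_le hS (min_le_right _ _))
    have hx4 : (t.i:ℝ)/2^t.k < ((s.i:ℝ)+1)/2^s.k :=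
      lt_of_le_of_lt (le_max_right _ _) (lt_of_lt_of_le hS (min_le_left _ _))
    have hnSy : ¬ (max ((s.j:ℝ)/2^s.k) ((t.j:ℝ)/2^t.k)
        < min (((s.j:ℝ)+1)/2^s.k) (((t.j:ℝ)+1)/2^t.k)) := by
      rcases hdisj with h | h
      · exact absurd hS h
      · exact h
    rcases hk with hk | hk
    · -- same level
      rw [hk] at hx3 hx4 hy1 hy2
      have e1 : s.i < t.i + 1 := lt_same (by push_cast; exact hx3)
      have e2 : t.i < s.i + 1 := lt_same (by push_cast; exact hx4)
      have e3 : s.j ≤ t.j + 1 := le_same (by push_cast; exact hy1)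
      have e4 : t.j ≤ s.j + 1 := le_same (by push_cast; exact hy2)
      have hii : s.i = t.i := by omega
      have hjj : s.j ≠ t.j := fun h => hne (DS_ext hk.symm hii h)
      have hsum := same_ne s.i s.j t.i t.j (by omega)
      simp only [col, hk]
      by_cases hpar : s.k % 2 = 0
      · rw [if_pos hpar, if_pos hpar]; exact hsum
      · rw [if_neg hpar, if_neg hpar]; intro h; exact hsum (by linear_combination -h)
    · -- cross level
      rw [hk] at hx3 hx4 hy1 hy2
      have e1 : 2*s.i < t.i + 1 := lt_up (by push_cast; exact hx3)
      have e2 : t.i < 2*(s.i+1) := lt_down (by push_cast; exact hx4)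
      have e3 : 2*s.j ≤ t.j + 1 := le_up (by push_cast; exact hy1)
      have e4 : t.j ≤ 2*(s.j+1) := le_down (by push_cast; exact hy2)
      have hyedge : ¬ (2*s.j ≤ t.j ∧ t.j ≤ 2*s.j+1) := by
        rintro ⟨h5, h6⟩
        apply hnSy
        rw [hk]
        refine max_lt (lt_min ?_ ?_) (lt_min ?_ ?_)
        · have := same_lt (k:=s.k) (a:=s.j) (b:=s.j+1) (by omega)
          push_cast at this; exact this
        · have := up_lt (k:=s.k) (a:=s.j) (b:=t.j+1) (by omega)
          push_cast at this; exact this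
        · have := down_lt (k:=s.k) (a:=t.j) (b:=s.j+1) (by omega)
          push_cast at this; exact this
        · have := same_lt (k:=s.k+1) (a:=t.j) (b:=t.j+1) (by omega)
          push_cast at this; exact this
      have hsum := cross_ne s.i s.j t.i t.j (by omega) (by omega)
      simp only [col, hk]
      by_cases hpar : s.k % 2 = 0
      · rw [if_pos hpar, if_neg (by omega)]
        intro h; exact hsum (by linear_combination h)
      · rw [if_neg hpar, if_pos (by omega)]
        intro h; exact hsum (by linear_combination -h)
  · -- strict overlap in y, weak in x
    have hy3 : (s.j:ℝ)/2^s.k < ((t.j:ℝ)+1)/2^t.k :=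
      lt_of_le_of_lt (le_max_left _ _) (lt_of_lt_of_le hS (min_le_right _ _))
    have hy4 : (t.j:ℝ)/2^t.k < ((s.j:ℝ)+1)/2^s.k :=
      lt_of_le_of_lt (le_max_right _ _) (lt_of_lt_of_le hS (min_le_left _ _))
    have hnSx : ¬ (max ((s.i:ℝ)/2^s.k) ((t.i:ℝ)/2^t.k)
        < min (((s.i:ℝ)+1)/2^s.k) (((t.i:ℝ)+1)/2^t.k)) := by
      rcases hdisj with h | h
      · exact h
      · exact absurd hS h
    rcases hk with hk | hk
    · -- same level
      rw [hk] at hy3 hy4 hx1 hx2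
      have e1 : s.j < t.j + 1 := lt_same (by push_cast; exact hy3)
      have e2 : t.j < s.j + 1 := lt_same (by push_cast; exact hy4)
      have e3 : s.i ≤ t.i + 1 := le_same (by push_cast; exact hx1)
      have e4 : t.i ≤ s.i + 1 := le_same (by push_cast; exact hx2)
      have hjj : s.j = t.j := by omega
      have hii : s.i ≠ t.i := fun h => hne (DS_ext hk.symm h hjj)
      have hsum := same_ne s.i s.j t.i t.j (by omega)
      simp only [col, hk]
      by_cases hpar : s.k % 2 = 0
      · rw [if_pos hpar, if_pos hpar]; exact hsum
      · rw [if_neg hpar, if_neg hpar]; intro h; exact hsum (by linear_combination -h)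
    · -- cross level
      rw [hk] at hy3 hy4 hx1 hx2
      have e1 : 2*s.j < t.j + 1 := lt_up (by push_cast; exact hy3)
      have e2 : t.j < 2*(s.j+1) := lt_down (by push_cast; exact hy4)
      have e3 : 2*s.i ≤ t.i + 1 := le_up (by push_cast; exact hx1)
      have e4 : t.i ≤ 2*(s.i+1) := le_down (by push_cast; exact hx2)
      have hxedge : ¬ (2*s.i ≤ t.i ∧ t.i ≤ 2*s.i+1) := by
        rintro ⟨h5, h6⟩
        apply hnSx
        rw [hk]
        refine max_lt (lt_min ?_ ?_) (lt_min ?_ ?_)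
        · have := same_lt (k:=s.k) (a:=s.i) (b:=s.i+1) (by omega)
          push_cast at this; exact this
        · have := up_lt (k:=s.k) (a:=s.i) (b:=t.i+1) (by omega)
          push_cast at this; exact this
        · have := down_lt (k:=s.k) (a:=t.i) (b:=s.i+1) (by omega)
          push_cast at this; exact this
        · have := same_lt (k:=s.k+1) (a:=t.i) (b:=t.i+1) (by omega)
          push_cast at this; exact this
      have hsum0 := cross_ne s.j s.i t.j t.i (by omega) (by omega)
      have hsum : (((s.i:ℤ) + (s.j:ℤ) : ℤ) : ZMod 3) + (((t.i:ℤ) + (t.j:ℤ) : ℤ) : ZMod 3) ≠ 1 := by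
        intro h; apply hsum0; push_cast at h ⊢; linear_combination h
      simp only [col, hk]
      by_cases hpar : s.k % 2 = 0
      · rw [if_pos hpar, if_neg (by omega)]
        intro h; exact hsum (by linear_combination h)
      · rw [if_neg hpar, if_pos (by omega)]
        intro h; exact hsum (by linear_combination -h)

end UTC

/-- There is a single coloring of all dyadic squares by 3 colors that properly
colors every balanced quadtree under edge adjacency. -/
theorem universal_three_coloring_balanced :
    ∃ c : DyadicSquare → Fin 3,
      ∀ Q : Finset DyadicSquare, IsQuadtree Q → IsBalanced Q →
        ∀ s ∈ Q, ∀ t ∈ Q, DyadicSquare.EdgeAdj s t → c s ≠ c t := by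
  refine ⟨UTC.col, fun Q hQ hB s hs t ht hadj => ?_⟩
  have hdisj := hQ.1 (by exact_mod_cast hs) (by exact_mod_cast ht) hadj.1
  have hbal := hB s hs t ht hadj
  rcases Nat.le_total s.k t.k with hle | hle
  · exact UTC.key s t (by omega) hadj.1 hadj.2 hdisj
  · refine (UTC.key t s (by omega) (Ne.symm hadj.1) ?_ ?_).symm
    · rw [Set.inter_comm]; exact hadj.2
    · rw [Set.inter_comm]; exact hdisj
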